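/- (Theorem 1, statement 5, commutators.) For every z ∈ Ξ, φ, ψ ∈ Φ and g, h ∈ Δ_z, the commutator satisfies G_z(φ,g) · G_z(ψ,h) · G_z(φ,g)⁻¹ · G_z(ψ,h)⁻¹ = G_z(h*g − g*h, 0) ∈ Ψ_z. Moreover, if ν = 2 then Δ_z⁰ = {0}, so every g ∈ Δ_z is zero, M_z = Ψ_z, and M_z is commutative. -/
import Mathlib


open Polynomial Matrix

noncomputable section

/-- The matrix `D = diag(-1,1,...,1)` of size `ν × ν` with `ν = n + 2`. -/
def Dm (n : ℕ) : Matrix (Fin (n + 2)) (Fin (n + 2)) ℂ :=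
  Matrix.diagonal fun i => if i = 0 then -1 else 1

/-- Coefficientwise complex conjugation of a scalar polynomial (`ω` treated as real). -/
def cstar (p : ℂ[X]) : ℂ[X] := p.map (starRingEnd ℂ)

/-- Polynomial matrices of size `(n+2) × (n+2)`. -/
abbrev PM (n : ℕ) := Matrix (Fin (n + 2)) (Fin (n + 2)) ℂ[X]

/-- `U(ω)* = Σ Uι* ωⁱ` : coefficientwise conjugate transpose of a polynomial matrix. -/
def Mstar (n : ℕ) (U : PM n) : PM n := Matrix.of fun i j => cstar (U j i)

/-- The scalar polynomial `g(ω)* h(ω)` for vector polynomials `g, h`. -/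
def pdot (n : ℕ) (g h : Fin (n + 2) → ℂ[X]) : ℂ[X] := ∑ i, cstar (g i) * h i

/-- `Ξ = {z : z₁ = 1, z* D z = 0}`. -/
def Xi (n : ℕ) : Set (Fin (n + 2) → ℂ) :=
  {z | z 0 = 1 ∧ star z ⬝ᵥ (Dm n).mulVec z = 0}

/-- `Δ_z⁰ = {d : d* z = d* D z = 0}`. -/
def Delta0 (n : ℕ) (z : Fin (n + 2) → ℂ) : Set (Fin (n + 2) → ℂ) :=
  {d | star d ⬝ᵥ z = 0 ∧ star d ⬝ᵥ (Dm n).mulVec z = 0}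

/-- `Φ = {φ : φ(0) = 0, φ* = -φ}`. -/
def Phi : Set ℂ[X] := {φ | φ.eval 0 = 0 ∧ cstar φ = -φ}

/-- `Δ_z` : vector polynomials vanishing at 0 with all coefficient vectors in `Δ_z⁰`. -/
def DeltaZ (n : ℕ) (z : Fin (n + 2) → ℂ) : Set (Fin (n + 2) → ℂ[X]) :=
  {g | (∀ i, (g i).eval 0 = 0) ∧ ∀ k : ℕ, (fun i => (g i).coeff k) ∈ Delta0 n z}

/-- `G_z(φ,g) = D·[z(φ - (1/2)g*g)z* + (zg* - gz*)] + I`. -/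
def Gmat (n : ℕ) (z : Fin (n + 2) → ℂ) (φ : ℂ[X]) (g : Fin (n + 2) → ℂ[X]) : PM n :=
  (Dm n).map Polynomial.C *
      Matrix.of (fun i j =>
        Polynomial.C (z i) * (φ - Polynomial.C (1 / 2 : ℂ) * pdot n g g) *
            Polynomial.C (star (z j)) +
          (Polynomial.C (z i) * cstar (g j) - g i * Polynomial.C (star (z j)))) +
    1

/-- `M` : the group of polynomial matrices with `U(ω) D U(ω)* = D`. -/
def MM (n : ℕ) : Set (PM n) :=
  {U | U * (Dm n).map Polynomial.C * Mstar n U = (Dm n).map Polynomial.C}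

/-- `M₀ = {U ∈ M : U(0) = I}`. -/
def M0 (n : ℕ) : Set (PM n) :=
  {U | U ∈ MM n ∧ U.map (fun p => p.eval 0) = 1}

/-- `M_z = {G_z(φ,g) : φ ∈ Φ, g ∈ Δ_z}`. -/
def Mz (n : ℕ) (z : Fin (n + 2) → ℂ) : Set (PM n) :=
  {U | ∃ φ ∈ Phi, ∃ g ∈ DeltaZ n z, U = Gmat n z φ g}

/-- `Ψ_z = {G_z(φ,0) : φ ∈ Φ}`. -/
def Psi (n : ℕ) (z : Fin (n + 2) → ℂ) : Set (PM n) :=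
  {U | ∃ φ ∈ Phi, U = Gmat n z φ 0}

/-- Degree of a polynomial matrix: the largest `ι` with a nonzero coefficient `ω^ι`. -/
def degPM (n : ℕ) (U : PM n) : ℕ :=
  Finset.univ.sup fun p : Fin (n + 2) × Fin (n + 2) => (U p.1 p.2).natDegree

-- sign vector
def sgn (n : ℕ) : Fin (n + 2) → ℂ := fun i => if i = 0 then -1 else 1

lemma Dm_eq (n : ℕ) : Dm n = Matrix.diagonal (sgn n) := rfl

lemma Dmap_eq (n : ℕ) : (Dm n).map Polynomial.C =
    Matrix.diagonal (fun i => Polynomial.C (sgn n i)) := by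
  rw [Dm_eq, Matrix.diagonal_map (map_zero _)]

lemma cstar_cstar (p : ℂ[X]) : cstar (cstar p) = p := by
  simp only [cstar, Polynomial.map_map]
  have : (starRingEnd ℂ).comp (starRingEnd ℂ) = RingHom.id ℂ := by
    ext x; simp
  rw [this, Polynomial.map_id]

lemma cstar_zero : cstar 0 = 0 := Polynomial.map_zero _

lemma pdot_add_left (n : ℕ) (g g' h : Fin (n+2) → ℂ[X]) :
    pdot n (g + g') h = pdot n g h + pdot n g' h := by
  simp [pdot, cstar, Polynomial.map_add, add_mul, Finset.sum_add_distrib]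

lemma pdot_add_right (n : ℕ) (g h h' : Fin (n+2) → ℂ[X]) :
    pdot n g (h + h') = pdot n g h + pdot n g h' := by
  simp [pdot, mul_add, Finset.sum_add_distrib]

lemma pdot_neg_left (n : ℕ) (g h : Fin (n+2) → ℂ[X]) :
    pdot n (-g) h = -pdot n g h := by
  simp [pdot, cstar, Polynomial.map_neg]

lemma pdot_neg_right (n : ℕ) (g h : Fin (n+2) → ℂ[X]) :
    pdot n g (-h) = -pdot n g h := by
  simp [pdot]

lemma pdot_zero (n : ℕ) : pdot n 0 0 = 0 := by simp [pdot, cstar_zero]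

lemma cstar_pdot (n : ℕ) (g h : Fin (n+2) → ℂ[X]) :
    cstar (pdot n g h) = pdot n h g := by
  unfold pdot
  rw [show cstar (∑ i, cstar (g i) * h i) = ∑ i, cstar (cstar (g i) * h i) from
    Polynomial.map_sum _ _ _]
  refine Finset.sum_congr rfl fun i _ => ?_
  rw [show cstar (cstar (g i) * h i) = cstar (cstar (g i)) * cstar (h i) from
    Polynomial.map_mul _, cstar_cstar, mul_comm]

-- vecMulVec algebra
lemma vmv_mul_diagonal {R : Type*} [CommRing R] {m : Type*} [Fintype m] [DecidableEq m]
    (u v d : m → R) :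
    vecMulVec u v * Matrix.diagonal d = vecMulVec u (fun j => v j * d j) := by
  ext i j
  simp [Matrix.mul_diagonal, vecMulVec_apply, mul_assoc]

lemma vmv_mul_vmv {R : Type*} [CommRing R] {m : Type*} [Fintype m]
    (u v w x : m → R) :
    vecMulVec u v * vecMulVec w x = (∑ k, v k * w k) • vecMulVec u x := by
  ext i j
  simp only [Matrix.mul_apply, vecMulVec_apply, Matrix.smul_apply, smul_eq_mul,
    Finset.sum_mul]
  refine Finset.sum_congr rfl fun k _ => by ring

-- scalar sum lemmas
lemma sum_S1 {n : ℕ} {z : Fin (n+2) → ℂ} (hz : z ∈ Xi n) :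
    ∑ k, Polynomial.C (star (z k)) * Polynomial.C (sgn n k) * Polynomial.C (z k)
      = (0 : ℂ[X]) := by
  have h0 : star z ⬝ᵥ (Dm n).mulVec z = ∑ k, star (z k) * sgn n k * z k := by
    simp [dotProduct, Dm_eq, Matrix.mulVec_diagonal, mul_assoc]
  have : ∑ k, Polynomial.C (star (z k)) * Polynomial.C (sgn n k) * Polynomial.C (z k)
      = Polynomial.C (∑ k, star (z k) * sgn n k * z k) := by
    rw [map_sum]
    exact Finset.sum_congr rfl fun k _ => by rw [_root_.map_mul, _root_.map_mul]
  rw [this, ← h0, hz.2, map_zero]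

lemma sgn_conj {n : ℕ} (k : Fin (n+2)) : starRingEnd ℂ (sgn n k) = sgn n k := by
  simp [sgn, apply_ite (starRingEnd ℂ)]

lemma sgn_star {n : ℕ} (k : Fin (n+2)) : star (sgn n k) = sgn n k := sgn_conj k

lemma sum_S2 {n : ℕ} {z : Fin (n+2) → ℂ} {h : Fin (n+2) → ℂ[X]}
    (hh : h ∈ DeltaZ n z) :
    ∑ k, Polynomial.C (star (z k)) * Polynomial.C (sgn n k) * h k = (0 : ℂ[X]) := by
  apply Polynomial.ext
  intro m
  have hc := (hh.2 m).2
  simp only [dotProduct, Dm_eq, Matrix.mulVec_diagonal, Pi.star_apply] at hc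
  have hc' := congrArg (starRingEnd ℂ) hc
  simp only [map_sum, _root_.map_mul, sgn_conj, map_zero, starRingEnd_apply,
    star_star, Pi.star_apply, sgn_star] at hc'
  simp only [Polynomial.finset_sum_coeff, Polynomial.coeff_zero]
  calc ∑ k, (Polynomial.C (star (z k)) * Polynomial.C (sgn n k) * h k).coeff m
      = ∑ k, (h k).coeff m * (sgn n k * star (z k)) := by
        refine Finset.sum_congr rfl fun k _ => ?_
        rw [← Polynomial.C_mul, Polynomial.coeff_C_mul]
        ring
    _ = 0 := hc'

lemma sum_S3 {n : ℕ} {z : Fin (n+2) → ℂ} {g : Fin (n+2) → ℂ[X]}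
    (hg : g ∈ DeltaZ n z) :
    ∑ k, cstar (g k) * Polynomial.C (sgn n k) * Polynomial.C (z k) = (0 : ℂ[X]) := by
  apply Polynomial.ext
  intro m
  have hc := (hg.2 m).2
  simp only [dotProduct, Dm_eq, Matrix.mulVec_diagonal, Pi.star_apply] at hc
  simp only [Polynomial.finset_sum_coeff, Polynomial.coeff_zero]
  calc ∑ k, (cstar (g k) * Polynomial.C (sgn n k) * Polynomial.C (z k)).coeff m
      = ∑ k, star ((g k).coeff m) * (sgn n k * z k) := by
        refine Finset.sum_congr rfl fun k _ => ?_
        rw [mul_assoc, ← Polynomial.C_mul, Polynomial.coeff_mul_C]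
        rw [cstar]
        simp only [Polynomial.coeff_map, starRingEnd_apply]
    _ = 0 := hc

lemma g_zero_coord {n : ℕ} {z : Fin (n+2) → ℂ} {g : Fin (n+2) → ℂ[X]}
    (hz1 : z 0 = 1) (hg : g ∈ DeltaZ n z) : g 0 = 0 := by
  apply Polynomial.ext
  intro m
  rw [Polynomial.coeff_zero]
  have h1 := (hg.2 m).1
  have h2 := (hg.2 m).2
  simp only [dotProduct, Dm_eq, Matrix.mulVec_diagonal, Pi.star_apply] at h1 h2
  have h4 : ∑ k, (star ((g k).coeff m) * z k - star ((g k).coeff m) * (sgn n k * z k))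
      = 0 := by
    rw [Finset.sum_sub_distrib, h1, h2, sub_zero]
  rw [Finset.sum_eq_single 0] at h4
  · simp only [sgn, if_pos rfl, hz1, mul_one, neg_mul, one_mul, mul_neg,
      sub_neg_eq_add] at h4
    have h5 : star ((g 0).coeff m) = 0 := by
      simp only [if_true, mul_neg, mul_one, sub_neg_eq_add] at h4
      linear_combination h4 / 2
    simpa using congrArg star h5
  · intro k _ hk
    simp [sgn, if_neg hk]
  · simp

lemma sum_S4 {n : ℕ} {z : Fin (n+2) → ℂ} {g : Fin (n+2) → ℂ[X]}
    (hz1 : z 0 = 1) (hg : g ∈ DeltaZ n z) (h : Fin (n+2) → ℂ[X]) :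
    ∑ k, cstar (g k) * Polynomial.C (sgn n k) * h k = pdot n g h := by
  unfold pdot
  refine Finset.sum_congr rfl fun k _ => ?_
  by_cases hk : k = 0
  · subst hk
    rw [g_zero_coord hz1 hg, cstar_zero]
    ring
  · simp [sgn, if_neg hk]

lemma Gdecomp (n : ℕ) (z : Fin (n+2) → ℂ) (φ : ℂ[X]) (g : Fin (n+2) → ℂ[X]) :
    Gmat n z φ g =
      Matrix.diagonal (fun i => Polynomial.C (sgn n i)) *
        ((φ - Polynomial.C (1/2 : ℂ) * pdot n g g) •
            vecMulVec (fun i => Polynomial.C (z i)) (fun j => Polynomial.C (star (z j)))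
          + vecMulVec (fun i => Polynomial.C (z i)) (fun j => cstar (g j))
          - vecMulVec g (fun j => Polynomial.C (star (z j)))) + 1 := by
  unfold Gmat
  rw [Dmap_eq]
  congr 1
  congr 1
  ext i j
  simp only [Matrix.of_apply, Matrix.sub_apply, Matrix.add_apply, Matrix.smul_apply,
    vecMulVec_apply, smul_eq_mul]
  ring

lemma key {n : ℕ} {z : Fin (n+2) → ℂ} {g h : Fin (n+2) → ℂ[X]}
    (hz : z ∈ Xi n) (hg : g ∈ DeltaZ n z) (hh : h ∈ DeltaZ n z) (a b : ℂ[X]) :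
    (a • vecMulVec (fun i => Polynomial.C (z i)) (fun j => Polynomial.C (star (z j)))
      + vecMulVec (fun i => Polynomial.C (z i)) (fun j => cstar (g j))
      - vecMulVec g (fun j => Polynomial.C (star (z j))))
    * Matrix.diagonal (fun i => Polynomial.C (sgn n i))
    * (b • vecMulVec (fun i => Polynomial.C (z i)) (fun j => Polynomial.C (star (z j)))
      + vecMulVec (fun i => Polynomial.C (z i)) (fun j => cstar (h j))
      - vecMulVec h (fun j => Polynomial.C (star (z j))))
    = (-(pdot n g h)) •
        vecMulVec (fun i => Polynomial.C (z i)) (fun j => Polynomial.C (star (z j))) := by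
  rw [sub_mul, add_mul, smul_mul_assoc, vmv_mul_diagonal, vmv_mul_diagonal,
    vmv_mul_diagonal]
  simp only [sub_mul, add_mul, mul_sub, mul_add, smul_mul_assoc, mul_smul_comm,
    vmv_mul_vmv]
  rw [sum_S1 hz, sum_S2 hh, sum_S3 hg, sum_S4 hz.1 hg h]
  simp only [zero_smul, smul_zero, sub_zero, zero_sub, add_zero, zero_add, neg_smul]

lemma abstract_mul {n : ℕ} (Dg P Q R V : PM n) (c : ℂ[X])
    (hPDQ : P * Dg * Q = c • V) (hM : c • V + P + Q = R) :
    (Dg * P + 1) * (Dg * Q + 1) = Dg * R + 1 := by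
  have e : (Dg * P + 1) * (Dg * Q + 1) = Dg * (P * Dg * Q) + Dg * P + Dg * Q + 1 := by
    noncomm_ring
  rw [e, hPDQ, ← hM, mul_add, mul_add]

lemma cstar_add (p q : ℂ[X]) : cstar (p + q) = cstar p + cstar q :=
  Polynomial.map_add _

lemma Gmul {n : ℕ} {z : Fin (n+2) → ℂ} {g h : Fin (n+2) → ℂ[X]}
    (hz : z ∈ Xi n) (hg : g ∈ DeltaZ n z) (hh : h ∈ DeltaZ n z) (φ ψ : ℂ[X]) :
    Gmat n z φ g * Gmat n z ψ h =
      Gmat n z (φ + ψ + Polynomial.C (1/2 : ℂ) * (pdot n h g - pdot n g h)) (g + h) := by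
  rw [Gdecomp n z φ g, Gdecomp n z ψ h, Gdecomp n z _ (g + h)]
  refine abstract_mul _ _ _ _ _ (-(pdot n g h)) (key hz hg hh _ _) ?_
  apply Matrix.ext
  intro i j
  simp only [Matrix.add_apply, Matrix.sub_apply, Matrix.smul_apply, vecMulVec_apply,
    smul_eq_mul, Pi.add_apply, cstar_add, pdot_add_left, pdot_add_right]
  have h2 : (Polynomial.C (1/2 : ℂ)) * 2 = (1 : ℂ[X]) := by
    rw [← map_ofNat (Polynomial.C : ℂ →+* ℂ[X]) 2, ← Polynomial.C_mul]
    norm_num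
  linear_combination (pdot n g h * Polynomial.C (z i) * Polynomial.C (star (z j))) * h2

lemma Gzero (n : ℕ) (z : Fin (n+2) → ℂ) : Gmat n z 0 0 = 1 := by
  have hp : pdot n (0 : Fin (n+2) → ℂ[X]) 0 = 0 := pdot_zero n
  unfold Gmat
  rw [hp]
  apply Matrix.ext
  intro i j
  simp [cstar_zero, Matrix.mul_apply]

lemma DeltaZ_zero (n : ℕ) (z : Fin (n+2) → ℂ) : (0 : Fin (n+2) → ℂ[X]) ∈ DeltaZ n z := by
  refine ⟨fun i => by simp, fun k => ⟨?_, ?_⟩⟩ <;> simp [dotProduct]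

lemma DeltaZ_neg {n : ℕ} {z : Fin (n+2) → ℂ} {g : Fin (n+2) → ℂ[X]}
    (hg : g ∈ DeltaZ n z) : -g ∈ DeltaZ n z := by
  refine ⟨fun i => by simp [hg.1 i], fun k => ?_⟩
  obtain ⟨h1, h2⟩ := hg.2 k
  constructor
  · simpa [dotProduct, Polynomial.coeff_neg, neg_mul, Finset.sum_neg_distrib] using
      congrArg Neg.neg h1
  · simpa [dotProduct, Polynomial.coeff_neg, neg_mul, Finset.sum_neg_distrib] using
      congrArg Neg.neg h2

lemma DeltaZ_add {n : ℕ} {z : Fin (n+2) → ℂ} {g h : Fin (n+2) → ℂ[X]}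
    (hg : g ∈ DeltaZ n z) (hh : h ∈ DeltaZ n z) : g + h ∈ DeltaZ n z := by
  refine ⟨fun i => by simp [hg.1 i, hh.1 i], fun k => ?_⟩
  obtain ⟨h1, h2⟩ := hg.2 k
  obtain ⟨h3, h4⟩ := hh.2 k
  constructor
  · have := congrArg₂ (· + ·) h1 h3
    simpa [dotProduct, Polynomial.coeff_add, add_mul, Finset.sum_add_distrib] using this
  · have := congrArg₂ (· + ·) h2 h4
    simpa [dotProduct, Polynomial.coeff_add, add_mul, Finset.sum_add_distrib] using this

lemma Ginv {n : ℕ} {z : Fin (n+2) → ℂ} {g : Fin (n+2) → ℂ[X]}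
    (hz : z ∈ Xi n) (hg : g ∈ DeltaZ n z) (φ : ℂ[X]) :
    (Gmat n z φ g)⁻¹ = Gmat n z (-φ) (-g) := by
  apply Matrix.inv_eq_right_inv
  rw [Gmul hz hg (DeltaZ_neg hg) φ (-φ)]
  have hv : g + -g = (0 : Fin (n+2) → ℂ[X]) := by funext i; simp
  have hs : φ + -φ + Polynomial.C (1/2 : ℂ) * (pdot n (-g) g - pdot n g (-g)) = 0 := by
    rw [pdot_neg_left, pdot_neg_right]; ring
  rw [hv, hs, Gzero]

lemma cstar_eval0 (p : ℂ[X]) : (cstar p).eval 0 = starRingEnd ℂ (p.eval 0) := by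
  rw [← Polynomial.coeff_zero_eq_eval_zero, cstar, Polynomial.coeff_map,
    Polynomial.coeff_zero_eq_eval_zero]

lemma pdot_eval0 {n : ℕ} {g : Fin (n+2) → ℂ[X]} (hg1 : ∀ i, (g i).eval 0 = 0)
    (h : Fin (n+2) → ℂ[X]) : (pdot n g h).eval 0 = 0 := by
  unfold pdot
  rw [Polynomial.eval_finset_sum]
  refine Finset.sum_eq_zero fun i _ => ?_
  rw [Polynomial.eval_mul, cstar_eval0, hg1 i, map_zero, zero_mul]

lemma comm_mem_Phi {n : ℕ} {z : Fin (n+2) → ℂ} {g h : Fin (n+2) → ℂ[X]}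
    (hg : g ∈ DeltaZ n z) (hh : h ∈ DeltaZ n z) :
    pdot n h g - pdot n g h ∈ Phi := by
  constructor
  · rw [Polynomial.eval_sub, pdot_eval0 hh.1, pdot_eval0 hg.1, sub_zero]
  · rw [show cstar (pdot n h g - pdot n g h) = cstar (pdot n h g) - cstar (pdot n g h)
      from Polynomial.map_sub _, cstar_pdot, cstar_pdot]
    ring

lemma mem_DeltaZ_zero_of_Delta0 {n : ℕ} {z : Fin (n+2) → ℂ}
    (hd : Delta0 n z = {0}) {g : Fin (n+2) → ℂ[X]} (hg : g ∈ DeltaZ n z) : g = 0 := by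
  funext i
  apply Polynomial.ext
  intro m
  have := hg.2 m
  rw [hd, Set.mem_singleton_iff] at this
  have := congrFun this i
  simpa using this

lemma sum_fin02 (f : Fin (0+2) → ℂ) : ∑ x, f x = f 0 + f 1 := by
  rw [show (Finset.univ : Finset (Fin (0+2))) = ({0, 1} : Finset (Fin (0+2))) by decide]
  exact Finset.sum_pair (by decide)

lemma Delta0_n0 {z : Fin (0+2) → ℂ} (hz : z ∈ Xi 0) : Delta0 0 z = {0} := by
  obtain ⟨hz0, hzD⟩ := hz
  have h10 : (1 : Fin (0+2)) ≠ 0 := by decide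
  simp only [dotProduct, Dm_eq, Matrix.mulVec_diagonal, Pi.star_apply, sgn] at hzD
  rw [sum_fin02] at hzD
  simp only [if_pos rfl, if_neg h10, hz0, if_true, star_one, mul_one, one_mul,
    neg_mul] at hzD
  have hz1 : star (z 1) * z 1 = 1 := by linear_combination hzD
  have hz1ne : z 1 ≠ 0 := by
    intro h0
    rw [h0, mul_zero] at hz1
    exact zero_ne_one hz1
  ext d
  simp only [Delta0, Set.mem_setOf_eq, Set.mem_singleton_iff]
  constructor
  · rintro ⟨h1, h2⟩
    simp only [dotProduct, Dm_eq, Matrix.mulVec_diagonal, Pi.star_apply, sgn] at h1 h2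
    rw [sum_fin02] at h1 h2
    simp only [if_pos rfl, if_neg h10, hz0, if_true, mul_one, one_mul, neg_mul] at h1 h2
    have hd1 : star (d 1) * z 1 = 0 := by linear_combination (h1 + h2) / 2
    have hd1' : star (d 1) = 0 := by
      rcases mul_eq_zero.mp hd1 with h | h
      · exact h
      · exact absurd h hz1ne
    have hd0 : star (d 0) = 0 := by
      rw [hd1', zero_mul, add_zero] at h1
      simpa using h1
    funext i
    fin_cases i
    · simpa using congrArg star hd0
    · simpa using congrArg star hd1'
  · rintro rfl
    constructor <;> simp [dotProduct]

/-- Theorem 1, statement 5, commutators: the commutator of `G_z(φ,g)` and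
`G_z(ψ,h)` is `G_z(h*g − g*h, 0) ∈ Ψ_z`; and if `ν = 2` (i.e. `n = 0`) then
`Δ_z⁰ = {0}`, every `g ∈ Δ_z` is zero, `M_z = Ψ_z` and `M_z` is commutative. -/
theorem stmt9 (n : ℕ) (z : Fin (n + 2) → ℂ) (hz : z ∈ Xi n)
    (φ ψ : ℂ[X]) (hφ : φ ∈ Phi) (hψ : ψ ∈ Phi)
    (g h : Fin (n + 2) → ℂ[X]) (hg : g ∈ DeltaZ n z) (hh : h ∈ DeltaZ n z) :
    (Gmat n z φ g * Gmat n z ψ h * (Gmat n z φ g)⁻¹ * (Gmat n z ψ h)⁻¹ =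
        Gmat n z (pdot n h g - pdot n g h) 0 ∧
      Gmat n z (pdot n h g - pdot n g h) 0 ∈ Psi n z) ∧
    (n = 0 →
      Delta0 n z = {0} ∧ g = 0 ∧ Mz n z = Psi n z ∧
        ∀ A ∈ Mz n z, ∀ B ∈ Mz n z, A * B = B * A) := by
  have hgneg := DeltaZ_neg hg
  have hhneg := DeltaZ_neg hh
  have hgh := DeltaZ_add hg hh
  have hghg := DeltaZ_add hgh hgneg
  constructor
  · constructor
    · rw [Ginv hz hg φ, Ginv hz hh ψ, Gmul hz hg hh φ ψ,
        Gmul hz hgh hgneg _ (-φ), Gmul hz hghg hhneg _ (-ψ)]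
      have hv : g + h + -g + -h = (0 : Fin (n+2) → ℂ[X]) := by
        funext i
        simp only [Pi.add_apply, Pi.neg_apply, Pi.zero_apply]
        ring
      rw [hv]
      refine congrArg (fun p => Gmat n z p 0) ?_
      simp only [pdot_add_left, pdot_add_right, pdot_neg_left, pdot_neg_right]
      have h2 : (Polynomial.C (1/2 : ℂ)) * 2 = (1 : ℂ[X]) := by
        rw [← map_ofNat (Polynomial.C : ℂ →+* ℂ[X]) 2, ← Polynomial.C_mul]
        norm_num
      linear_combination (pdot n h g - pdot n g h) * h2
    · exact ⟨pdot n h g - pdot n g h, comm_mem_Phi hg hh, rfl⟩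
  · intro hn
    subst hn
    have hΔ := Delta0_n0 hz
    have hg0 : g = 0 := mem_DeltaZ_zero_of_Delta0 hΔ hg
    refine ⟨hΔ, hg0, ?_, ?_⟩
    · ext U
      constructor
      · rintro ⟨φ₀, hφ₀, g₀, hg₀, rfl⟩
        rw [mem_DeltaZ_zero_of_Delta0 hΔ hg₀]
        exact ⟨φ₀, hφ₀, rfl⟩
      · rintro ⟨φ₀, hφ₀, rfl⟩
        exact ⟨φ₀, hφ₀, 0, DeltaZ_zero 0 z, rfl⟩
    · rintro A ⟨φ₁, hφ₁, g₁, hg₁, rfl⟩ B ⟨φ₂, hφ₂, g₂, hg₂, rfl⟩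
      rw [mem_DeltaZ_zero_of_Delta0 hΔ hg₁, mem_DeltaZ_zero_of_Delta0 hΔ hg₂,
        Gmul hz (DeltaZ_zero 0 z) (DeltaZ_zero 0 z) φ₁ φ₂,
        Gmul hz (DeltaZ_zero 0 z) (DeltaZ_zero 0 z) φ₂ φ₁]
      refine congrArg (fun p => Gmat 0 z p (0 + 0)) ?_
      ring
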